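/- Let A be an n×n symmetric positive semidefinite matrix, p ∈ ℝⁿ with |p| = R > 0, and suppose α > 0 satisfies α ≤ R² · vᵀAv / (v·p)² for all v ∈ ℝⁿ with v·p ≠ 0. Set eₙ = p/|p| and C = A - 2α eₙ⊗eₙ. Then the 2n×2n block matrix [[A, C], [C, A]] is positive semidefinite. -/

import Mathlib

/-! With `E = e eᵀ` and `B = A - α E`, the block matrix is `[[B, B], [B, B]] + α f fᵀ` for
`f = (e, -e)`. The hypothesis says exactly that `B` is positive semidefinite (for `e = p / R`), so
`[[B, B], [B, B]]`, a submatrix of `B` with repeated indices, is too, and `α f fᵀ` is a nonnegative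
multiple of a rank-one positive semidefinite matrix. -/

namespace Matrix

variable {ι R : Type*}

lemma fromBlocks_self_eq_submatrix (B : Matrix ι ι R) :
    fromBlocks B B B B = B.submatrix (Sum.elim id id) (Sum.elim id id) := by
  ext (i | i) (j | j) <;> rfl

lemma PosSemidef.fromBlocks_self [Ring R] [PartialOrder R] [StarRing R] {B : Matrix ι ι R}
    (hB : B.PosSemidef) :
    (fromBlocks B B B B).PosSemidef :=
  fromBlocks_self_eq_submatrix B ▸ hB.submatrix _

lemma fromBlocks_vecMulVec_neg [Ring R] (u v : ι → R) :
    fromBlocks (vecMulVec u v) (-vecMulVec u v) (-vecMulVec u v) (vecMulVec u v) =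
      vecMulVec (Sum.elim u (-u)) (Sum.elim v (-v)) := by
  ext (i | i) (j | j) <;> simp [vecMulVec_apply]

variable [Fintype ι]

lemma posSemidef_vecMulVec_self (e : ι → ℝ) : (vecMulVec e e).PosSemidef := by
  simpa using posSemidef_vecMulVec_self_star e

lemma posSemidef_sub_smul_vecMulVec {A : Matrix ι ι ℝ} (hA : A.IsHermitian) {e : ι → ℝ} {α : ℝ}
    (h : ∀ u, α * (u ⬝ᵥ e) ^ 2 ≤ u ⬝ᵥ (A *ᵥ u)) :
    (A - α • vecMulVec e e).PosSemidef := by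
  refine .of_dotProduct_mulVec_nonneg
    (hA.sub ((posSemidef_vecMulVec_self e).isHermitian.smul (.all α))) fun u => ?_
  rw [star_trivial, sub_mulVec, smul_mulVec, vecMulVec_mulVec, dotProduct_sub, dotProduct_smul,
    dotProduct_comm e u]
  simp only [op_smul_eq_smul, dotProduct_smul, smul_eq_mul]
  linarith [sq (u ⬝ᵥ e), h u]

theorem posSemidef_fromBlocks_sub_smul_vecMulVec {A : Matrix ι ι ℝ} (hA : A.IsHermitian)
    {e : ι → ℝ} {α : ℝ} (hα : 0 ≤ α) (h : ∀ u, α * (u ⬝ᵥ e) ^ 2 ≤ u ⬝ᵥ (A *ᵥ u)) :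
    (fromBlocks A (A - (2 * α) • vecMulVec e e) (A - (2 * α) • vecMulVec e e) A).PosSemidef := by
  set B := A - α • vecMulVec e e
  have hsplit : fromBlocks A (A - (2 * α) • vecMulVec e e) (A - (2 * α) • vecMulVec e e) A =
      fromBlocks B B B B + α • vecMulVec (Sum.elim e (-e)) (Sum.elim e (-e)) := by
    rw [← fromBlocks_vecMulVec_neg, fromBlocks_smul, fromBlocks_add]
    congr 1 <;> module
  rw [hsplit]
  exact (posSemidef_sub_smul_vecMulVec hA h).fromBlocks_self.add
    ((posSemidef_vecMulVec_self _).smul hα)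

lemma mul_sq_dotProduct_inv_smul_le {A : Matrix ι ι ℝ} (hA : A.PosSemidef) {p : ι → ℝ} {R α : ℝ}
    (h : ∀ v, v ⬝ᵥ p ≠ 0 → α ≤ R ^ 2 * (v ⬝ᵥ (A *ᵥ v)) / (v ⬝ᵥ p) ^ 2) (u : ι → ℝ) :
    α * (u ⬝ᵥ R⁻¹ • p) ^ 2 ≤ u ⬝ᵥ (A *ᵥ u) := by
  have hq : 0 ≤ u ⬝ᵥ (A *ᵥ u) := by simpa using hA.dotProduct_mulVec_nonneg u
  rcases eq_or_ne R 0 with rfl | hR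
  · simpa using hq
  rcases eq_or_ne (u ⬝ᵥ p) 0 with hup | hup
  · simpa [hup] using hq
  have := (le_div_iff₀ (by positivity)).1 (h u hup)
  rw [dotProduct_smul, smul_eq_mul, mul_pow, inv_pow, ← mul_assoc, mul_comm α, mul_assoc,
    inv_mul_le_iff₀ (by positivity)]
  linarith

end Matrix

open Matrix

theorem block_matrix_psd_of_structural_condition_general {n : ℕ}
    (A : Matrix (Fin n) (Fin n) ℝ) (hA : A.PosSemidef)
    (p : Fin n → ℝ) (R : ℝ)
    (α : ℝ) (hα : 0 < α)
    (hcond : ∀ v : Fin n → ℝ, v ⬝ᵥ p ≠ 0 →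
      α ≤ R ^ 2 * (v ⬝ᵥ (A *ᵥ v)) / (v ⬝ᵥ p) ^ 2) :
    (Matrix.fromBlocks A (A - (2 * α) • Matrix.vecMulVec (R⁻¹ • p) (R⁻¹ • p))
      (A - (2 * α) • Matrix.vecMulVec (R⁻¹ • p) (R⁻¹ • p)) A).PosSemidef :=
  posSemidef_fromBlocks_sub_smul_vecMulVec hA.isHermitian hα.le
    (mul_sq_dotProduct_inv_smul_le hA hcond)

/-- If `A ≥ 0`, `|p| = R > 0` and `α ≤ R² vᵀAv/(v·p)²` whenever `v·p ≠ 0`, then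
with `e = p/|p|` and `C = A - 2α e⊗e`, the block matrix `[[A,C],[C,A]]` is
positive semidefinite. -/
theorem block_matrix_psd_of_structural_condition {n : ℕ}
    (A : Matrix (Fin n) (Fin n) ℝ) (hA : A.PosSemidef)
    (p : Fin n → ℝ) (R : ℝ) (hR : 0 < R) (hpR : Real.sqrt (p ⬝ᵥ p) = R)
    (α : ℝ) (hα : 0 < α)
    (hcond : ∀ v : Fin n → ℝ, v ⬝ᵥ p ≠ 0 →
      α ≤ R ^ 2 * (v ⬝ᵥ (A *ᵥ v)) / (v ⬝ᵥ p) ^ 2) :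
    (Matrix.fromBlocks A (A - (2 * α) • Matrix.vecMulVec (R⁻¹ • p) (R⁻¹ • p))
      (A - (2 * α) • Matrix.vecMulVec (R⁻¹ • p) (R⁻¹ • p)) A).PosSemidef :=
  block_matrix_psd_of_structural_condition_general A hA p R α hα hcond
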